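/- Let d ≥ 1, let μ be the Haar probability measure on the unitary group U(d) = Matrix.unitaryGroup (Fin d) ℂ, let e ∈ ℂ^d be a unit vector (ℓ² norm), and write ξ_U := U *ᵥ e. Let O be a Hermitian d×d complex matrix, ψ ∈ ℂ^d a unit vector, ε ∈ [0,1], and set ψ̃_U := √(1−ε) • ψ + √ε • ξ_U. Then ∫_{U(d)} re⟨ψ̃_U, O *ᵥ ψ̃_U⟩ dμ(U) = (1−ε)·re⟨ψ, O *ᵥ ψ⟩ + ε·(re Tr O)/d, with ⟨v, w⟩ := ∑_i conj(v i)·(w i). In particular, if ψ is a unit eigenvector of O with real eigenvalue E, the expected energy of the perturbed state is (1−ε)·E + ε·(re Tr O)/d. -/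

import Mathlib

/-!
Expanding `ψ̃_U = a ψ + b ξ_U` gives the constant term `a² ⟨ψ, O ψ⟩`, two cross terms linear in
`ξ_U` or in its conjugate, and `b² ⟨ξ_U, O ξ_U⟩`. By left invariance of Haar measure the law of
`ξ_U` is invariant under every fixed unitary `V`. Invariance under `-1` makes the mean of `ξ_U`
vanish, which kills the cross terms; invariance under a sign flip `diag(±1)` kills the off-diagonal
second moments `E[conj ξ_i ξ_j]`, and invariance under coordinate swaps makes the diagonal ones
equal, hence equal to `1/d` since `‖ξ_U‖ = ‖e‖ = 1`. So `E⟨ξ_U, O ξ_U⟩ = Tr O / d`.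
Integrability is automatic: `U(d)` is compact and all integrands are continuous.
-/

open MeasureTheory Matrix

/-- The standard inner product `⟨v, w⟩ = ∑ i, conj (v i) * w i` on `ℂ^d`. -/
noncomputable def cip {d : ℕ} (v w : Fin d → ℂ) : ℂ :=
  ∑ i, (starRingEnd ℂ) (v i) * w i

theorem cip_eq_star_dotProduct {d : ℕ} (v w : Fin d → ℂ) : cip v w = star v ⬝ᵥ w := rfl

namespace Matrix

variable {n R 𝕜 : Type*} [Fintype n] [CommRing R] [StarRing R] [RCLike 𝕜]

theorem star_dotProduct_self_eq_sum_norm_sq (v : n → 𝕜) :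
    star v ⬝ᵥ v = ((∑ i, ‖v i‖ ^ 2 : ℝ) : 𝕜) := by
  simp [dotProduct, RCLike.conj_mul]

theorem star_dotProduct_mulVec_eq_sum (O : Matrix n n R) (v : n → R) :
    star v ⬝ᵥ (O *ᵥ v) = ∑ i, ∑ j, O i j * (star (v i) * v j) := by
  simp only [dotProduct, mulVec, Finset.mul_sum, Pi.star_apply]
  exact Finset.sum_congr rfl fun i _ => Finset.sum_congr rfl fun j _ => by ring

variable [DecidableEq n]

theorem star_mulVec_dotProduct_mulVec {U : Matrix n n R} (hU : U ∈ unitaryGroup n R)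
    (v w : n → R) : star (U *ᵥ v) ⬝ᵥ (U *ᵥ w) = star v ⬝ᵥ w := by
  rw [star_mulVec, dotProduct_mulVec, vecMul_vecMul, ← star_eq_conjTranspose,
    Unitary.star_mul_self_of_mem hU, vecMul_one]

theorem diagonal_mem_unitaryGroup {s : n → R} (hs : ∀ i, star (s i) * s i = 1) :
    diagonal s ∈ unitaryGroup n R := by
  rw [mem_unitaryGroup_iff', star_eq_conjTranspose, diagonal_conjTranspose,
    diagonal_mul_diagonal, ← diagonal_one]
  exact congrArg diagonal (funext hs)

theorem permMatrix_mem_unitaryGroup (σ : Equiv.Perm n) :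
    σ.permMatrix R ∈ unitaryGroup n R := by
  rw [mem_unitaryGroup_iff', star_eq_conjTranspose, conjTranspose_permMatrix, ← permMatrix_mul,
    mul_inv_cancel, permMatrix_one]

theorem isCompact_unitaryGroup : IsCompact (unitaryGroup n 𝕜 : Set (Matrix n n 𝕜)) := by
  have hbox : IsCompact (Set.univ.pi fun _ : n => Set.univ.pi fun _ : n =>
      Metric.closedBall (0 : 𝕜) 1) :=
    isCompact_univ_pi fun _ => isCompact_univ_pi fun _ => isCompact_closedBall 0 1
  refine hbox.of_isClosed_subset ?_ fun U hU i _ j _ => ?_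
  · show IsClosed ({U : Matrix n n 𝕜 | star U * U = 1} ∩ {U | U * star U = 1})
    exact (isClosed_eq (by fun_prop) continuous_const).inter
      (isClosed_eq (by fun_prop) continuous_const)
  · simpa using entry_norm_bound_of_unitary hU i j

instance : CompactSpace (unitaryGroup n 𝕜) :=
  isCompact_iff_compactSpace.mp isCompact_unitaryGroup

end Matrix

namespace Matrix.UnitaryGroup

variable {n : Type*} [Fintype n] [DecidableEq n]
  [MeasurableSpace (unitaryGroup n ℂ)] [BorelSpace (unitaryGroup n ℂ)]
  {μ : Measure (unitaryGroup n ℂ)} [μ.IsHaarMeasure]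

theorem integrable_of_continuous {f : unitaryGroup n ℂ → ℂ} (hf : Continuous f) :
    Integrable f μ :=
  hf.integrable_of_hasCompactSupport (.of_compactSpace f)

theorem integral_re_of_continuous {f : unitaryGroup n ℂ → ℂ} (hf : Continuous f) :
    ∫ U, (f U).re ∂μ = (∫ U, f U ∂μ).re :=
  integral_re (integrable_of_continuous hf)

theorem integral_comp_mulVec_mulVec (e : n → ℂ) (f : (n → ℂ) → ℂ) (V : unitaryGroup n ℂ) :
    ∫ U, f ((V : Matrix n n ℂ) *ᵥ ((U : Matrix n n ℂ) *ᵥ e)) ∂μ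
      = ∫ U, f ((U : Matrix n n ℂ) *ᵥ e) ∂μ := by
  simpa [mulVec_mulVec] using
    integral_mul_left_eq_self (μ := μ) (fun U => f ((U : Matrix n n ℂ) *ᵥ e)) V

theorem integral_comp_mulVec_eq_zero_of_odd (e : n → ℂ) (f : (n → ℂ) → ℂ)
    (V : unitaryGroup n ℂ) (hf : ∀ v, f ((V : Matrix n n ℂ) *ᵥ v) = -f v) :
    ∫ U, f ((U : Matrix n n ℂ) *ᵥ e) ∂μ = 0 := by
  have h := integral_comp_mulVec_mulVec (μ := μ) e f V
  simp only [hf, integral_neg] at h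
  exact neg_eq_self.mp h

theorem integral_mulVec_apply (e : n → ℂ) (i : n) :
    ∫ U, ((U : Matrix n n ℂ) *ᵥ e) i ∂μ = 0 :=
  integral_comp_mulVec_eq_zero_of_odd e (· i) (-1) fun v => by
    simp [Unitary.coe_neg, neg_mulVec]

theorem integral_star_mulVec_apply_mul_of_ne (e : n → ℂ) {i j : n} (hij : i ≠ j) :
    ∫ U, star (((U : Matrix n n ℂ) *ᵥ e) i) * ((U : Matrix n n ℂ) *ᵥ e) j ∂μ = 0 := by
  let s : n → ℂ := fun k => if k = i then -1 else 1
  have hs : ∀ k, star (s k) * s k = 1 := fun k => by by_cases hk : k = i <;> simp [s, hk]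
  refine integral_comp_mulVec_eq_zero_of_odd e (fun v => star (v i) * v j)
    ⟨diagonal s, diagonal_mem_unitaryGroup hs⟩ fun v => ?_
  simp [mulVec_diagonal, s, hij.symm]

theorem integral_star_mulVec_apply_mul_self_eq (e : n → ℂ) (i j : n) :
    ∫ U, star (((U : Matrix n n ℂ) *ᵥ e) i) * ((U : Matrix n n ℂ) *ᵥ e) i ∂μ
      = ∫ U, star (((U : Matrix n n ℂ) *ᵥ e) j) * ((U : Matrix n n ℂ) *ᵥ e) j ∂μ := by
  rw [← integral_comp_mulVec_mulVec e (fun v => star (v i) * v i)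
    ⟨_, permMatrix_mem_unitaryGroup (Equiv.swap j i)⟩]
  simp only [permMatrix_mulVec, Function.comp_apply, Equiv.swap_apply_right]

theorem integral_star_mulVec_apply_mul_self [IsProbabilityMeasure μ] {e : n → ℂ}
    (he : star e ⬝ᵥ e = 1) (i : n) :
    ∫ U, star (((U : Matrix n n ℂ) *ᵥ e) i) * ((U : Matrix n n ℂ) *ᵥ e) i ∂μ
      = 1 / Fintype.card n := by
  have hsum : ∑ j, ∫ U, star (((U : Matrix n n ℂ) *ᵥ e) j) * ((U : Matrix n n ℂ) *ᵥ e) j ∂μ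
      = 1 := by
    rw [← integral_finsetSum _ fun j _ => integrable_of_continuous (by fun_prop)]
    change ∫ U, star ((U : Matrix n n ℂ) *ᵥ e) ⬝ᵥ ((U : Matrix n n ℂ) *ᵥ e) ∂μ = 1
    simp [star_mulVec_dotProduct_mulVec (Subtype.prop _), he]
  simp only [integral_star_mulVec_apply_mul_self_eq e _ i, Finset.sum_const, Finset.card_univ,
    nsmul_eq_mul] at hsum
  exact eq_one_div_of_mul_eq_one_right hsum

theorem integral_star_mulVec_apply_mul [IsProbabilityMeasure μ] {e : n → ℂ}
    (he : star e ⬝ᵥ e = 1) (i j : n) :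
    ∫ U, star (((U : Matrix n n ℂ) *ᵥ e) i) * ((U : Matrix n n ℂ) *ᵥ e) j ∂μ
      = if i = j then (1 / Fintype.card n : ℂ) else 0 := by
  split_ifs with hij
  · rw [hij, integral_star_mulVec_apply_mul_self he]
  · exact integral_star_mulVec_apply_mul_of_ne e hij

theorem integral_dotProduct_mulVec (e w : n → ℂ) :
    ∫ U, w ⬝ᵥ ((U : Matrix n n ℂ) *ᵥ e) ∂μ = 0 := by
  simp only [dotProduct]
  rw [integral_finsetSum _ fun i _ => integrable_of_continuous (by fun_prop)]
  simp [integral_const_mul, integral_mulVec_apply]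

theorem integral_star_mulVec_dotProduct (e w : n → ℂ) :
    ∫ U, star ((U : Matrix n n ℂ) *ᵥ e) ⬝ᵥ w ∂μ = 0 := by
  have hconj : ∀ U : unitaryGroup n ℂ, star ((U : Matrix n n ℂ) *ᵥ e) ⬝ᵥ w
      = starRingEnd ℂ (star w ⬝ᵥ ((U : Matrix n n ℂ) *ᵥ e)) := fun U => star_dotProduct _ _
  simp only [hconj, integral_conj, integral_dotProduct_mulVec, map_zero]

theorem integral_star_mulVec_dotProduct_mulVec_mulVec [IsProbabilityMeasure μ] {e : n → ℂ}
    (he : star e ⬝ᵥ e = 1) (O : Matrix n n ℂ) :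
    ∫ U, star ((U : Matrix n n ℂ) *ᵥ e) ⬝ᵥ (O *ᵥ ((U : Matrix n n ℂ) *ᵥ e)) ∂μ
      = O.trace / Fintype.card n := by
  have hint : ∀ i j, Integrable (fun U : unitaryGroup n ℂ =>
      O i j * (star (((U : Matrix n n ℂ) *ᵥ e) i) * ((U : Matrix n n ℂ) *ᵥ e) j)) μ :=
    fun i j => integrable_of_continuous (by fun_prop)
  simp only [star_dotProduct_mulVec_eq_sum]
  rw [integral_finsetSum _ fun i _ => integrable_finsetSum _ fun j _ => hint i j,
    Finset.sum_congr rfl fun i _ => integral_finsetSum _ fun j _ => hint i j]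
  simp only [integral_const_mul, integral_star_mulVec_apply_mul he, mul_ite, mul_zero,
    Finset.sum_ite_eq, Finset.mem_univ, if_true, trace, diag_apply, Finset.sum_div, mul_one_div]

theorem integral_star_smul_add_dotProduct_mulVec [IsProbabilityMeasure μ] {e : n → ℂ}
    (he : star e ⬝ᵥ e = 1) (O : Matrix n n ℂ) (ψ : n → ℂ) (a b : ℝ) :
    ∫ U, star (a • ψ + b • ((U : Matrix n n ℂ) *ᵥ e))
        ⬝ᵥ (O *ᵥ (a • ψ + b • ((U : Matrix n n ℂ) *ᵥ e))) ∂μ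
      = ((a ^ 2 : ℝ) : ℂ) * (star ψ ⬝ᵥ (O *ᵥ ψ))
        + ((b ^ 2 : ℝ) : ℂ) * (O.trace / Fintype.card n) := by
  set ξ : unitaryGroup n ℂ → n → ℂ := fun U => (U : Matrix n n ℂ) *ᵥ e
  have hexpand : ∀ U, star (a • ψ + b • ξ U) ⬝ᵥ (O *ᵥ (a • ψ + b • ξ U))
      = ((a ^ 2 : ℝ) : ℂ) * (star ψ ⬝ᵥ (O *ᵥ ψ))
        + ((a * b : ℝ) : ℂ) * (star ψ ⬝ᵥ (O *ᵥ ξ U))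
        + ((a * b : ℝ) : ℂ) * (star (ξ U) ⬝ᵥ (O *ᵥ ψ))
        + ((b ^ 2 : ℝ) : ℂ) * (star (ξ U) ⬝ᵥ (O *ᵥ ξ U)) := fun U => by
    simp only [star_add, star_smul, star_trivial, mulVec_add, mulVec_smul, add_dotProduct,
      dotProduct_add, smul_dotProduct, dotProduct_smul, Complex.real_smul]
    push_cast
    ring
  have hcross : ∫ U, star ψ ⬝ᵥ (O *ᵥ ξ U) ∂μ = 0 := by
    simp only [dotProduct_mulVec (star ψ) O]
    exact integral_dotProduct_mulVec e _
  change ∫ U, star (a • ψ + b • ξ U) ⬝ᵥ (O *ᵥ (a • ψ + b • ξ U)) ∂μ = _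
  simp only [hexpand]
  rw [integral_add, integral_add, integral_add, integral_const, integral_const_mul,
    integral_const_mul, integral_const_mul, hcross, integral_star_mulVec_dotProduct,
    integral_star_mulVec_dotProduct_mulVec_mulVec he]
  · simp
  all_goals exact integrable_of_continuous (by fun_prop)

theorem integral_re_star_smul_add_dotProduct_mulVec [IsProbabilityMeasure μ] {e : n → ℂ}
    (he : star e ⬝ᵥ e = 1) (O : Matrix n n ℂ) (ψ : n → ℂ) (a b : ℝ) :
    ∫ U, (star (a • ψ + b • ((U : Matrix n n ℂ) *ᵥ e))
        ⬝ᵥ (O *ᵥ (a • ψ + b • ((U : Matrix n n ℂ) *ᵥ e)))).re ∂μ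
      = a ^ 2 * (star ψ ⬝ᵥ (O *ᵥ ψ)).re + b ^ 2 * O.trace.re / Fintype.card n := by
  rw [integral_re_of_continuous (by fun_prop), integral_star_smul_add_dotProduct_mulVec he,
    Complex.add_re, Complex.re_ofReal_mul, Complex.re_ofReal_mul, Complex.div_natCast_re,
    mul_div_assoc]

end Matrix.UnitaryGroup

theorem stmt15_general (d : ℕ)
    [MeasurableSpace (Matrix.unitaryGroup (Fin d) ℂ)]
    [BorelSpace (Matrix.unitaryGroup (Fin d) ℂ)]
    (μ : Measure (Matrix.unitaryGroup (Fin d) ℂ))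
    [μ.IsHaarMeasure] [IsProbabilityMeasure μ]
    (e : Fin d → ℂ) (he : ∑ i, ‖e i‖ ^ 2 = 1)
    (O : Matrix (Fin d) (Fin d) ℂ)
    (ψ : Fin d → ℂ) (hψ : ∑ i, ‖ψ i‖ ^ 2 = 1)
    (ε : ℝ) (hε0 : 0 ≤ ε) (hε1 : ε ≤ 1) :
    (∫ U : Matrix.unitaryGroup (Fin d) ℂ,
        (cip (Real.sqrt (1 - ε) • ψ + Real.sqrt ε • ((U : Matrix (Fin d) (Fin d) ℂ) *ᵥ e))
          (O *ᵥ (Real.sqrt (1 - ε) • ψ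
            + Real.sqrt ε • ((U : Matrix (Fin d) (Fin d) ℂ) *ᵥ e)))).re ∂μ
      = (1 - ε) * (cip ψ (O *ᵥ ψ)).re + ε * O.trace.re / (d : ℝ)) ∧
    ∀ E : ℝ, O *ᵥ ψ = (E : ℂ) • ψ →
      ∫ U : Matrix.unitaryGroup (Fin d) ℂ,
        (cip (Real.sqrt (1 - ε) • ψ + Real.sqrt ε • ((U : Matrix (Fin d) (Fin d) ℂ) *ᵥ e))
          (O *ᵥ (Real.sqrt (1 - ε) • ψ
            + Real.sqrt ε • ((U : Matrix (Fin d) (Fin d) ℂ) *ᵥ e)))).re ∂μ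
      = (1 - ε) * E + ε * O.trace.re / (d : ℝ) := by
  simp only [cip_eq_star_dotProduct]
  have he' : star e ⬝ᵥ e = 1 := by simp [star_dotProduct_self_eq_sum_norm_sq, he]
  have hmean :=
    UnitaryGroup.integral_re_star_smul_add_dotProduct_mulVec (μ := μ) he' O ψ √(1 - ε) √ε
  rw [Real.sq_sqrt (by linarith), Real.sq_sqrt hε0, Fintype.card_fin] at hmean
  refine ⟨hmean, fun E hE => ?_⟩
  rw [hmean, hE, dotProduct_smul, star_dotProduct_self_eq_sum_norm_sq, hψ]
  simp

/-- Expected energy of an isotropically perturbed state (end of Appendix C of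
the paper): for Hermitian `O`, unit `ψ`, `ε ∈ [0,1]` and
`ψ̃ = √(1−ε) ψ + √ε ξ` with Haar-random `ξ = U *ᵥ e`,
`E[⟨ψ̃, O ψ̃⟩] = (1−ε)·⟨ψ, O ψ⟩ + ε·Tr(O)/d`. In particular, if `ψ` is a unit
eigenvector of `O` with real eigenvalue `E`, this equals `(1−ε)·E + ε·Tr(O)/d`. -/
theorem stmt15 (d : ℕ) (hd : 1 ≤ d)
    [MeasurableSpace (Matrix.unitaryGroup (Fin d) ℂ)]
    [BorelSpace (Matrix.unitaryGroup (Fin d) ℂ)]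
    (μ : Measure (Matrix.unitaryGroup (Fin d) ℂ))
    [μ.IsHaarMeasure] [IsProbabilityMeasure μ]
    (e : Fin d → ℂ) (he : ∑ i, ‖e i‖ ^ 2 = 1)
    (O : Matrix (Fin d) (Fin d) ℂ) (hO : O.IsHermitian)
    (ψ : Fin d → ℂ) (hψ : ∑ i, ‖ψ i‖ ^ 2 = 1)
    (ε : ℝ) (hε0 : 0 ≤ ε) (hε1 : ε ≤ 1) :
    (∫ U : Matrix.unitaryGroup (Fin d) ℂ,
        (cip (Real.sqrt (1 - ε) • ψ + Real.sqrt ε • ((U : Matrix (Fin d) (Fin d) ℂ) *ᵥ e))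
          (O *ᵥ (Real.sqrt (1 - ε) • ψ
            + Real.sqrt ε • ((U : Matrix (Fin d) (Fin d) ℂ) *ᵥ e)))).re ∂μ
      = (1 - ε) * (cip ψ (O *ᵥ ψ)).re + ε * O.trace.re / (d : ℝ)) ∧
    ∀ E : ℝ, O *ᵥ ψ = (E : ℂ) • ψ →
      ∫ U : Matrix.unitaryGroup (Fin d) ℂ,
        (cip (Real.sqrt (1 - ε) • ψ + Real.sqrt ε • ((U : Matrix (Fin d) (Fin d) ℂ) *ᵥ e))
          (O *ᵥ (Real.sqrt (1 - ε) • ψ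
            + Real.sqrt ε • ((U : Matrix (Fin d) (Fin d) ℂ) *ᵥ e)))).re ∂μ
      = (1 - ε) * E + ε * O.trace.re / (d : ℝ) :=
  stmt15_general d μ e he O ψ hψ ε hε0 hε1
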